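/- There is an absolute constant A > 0 such that the following holds (part 2 of the Estimator Lemma). Let N ≥ 1, let u ∈ ℝ^N, let τ > 0 and ζ ∈ (0,1], and let X > 0 be a real with X ≥ ‖u‖₂. Let μ ∈ (0,1) and let T₁ be an integer with T₁ ≥ A·N·τ²·log(2/μ)/(ζ²·X²). If J : {1,…,T₁} → {0,…,N−1} is a uniformly random function and Θ(J) = (N/T₁)·Σ_{i=1}^{T₁} min(|u[J(i)]|, τ)², then with probability at least 1 − μ one has Θ(J) ≤ (1+ζ)·X². -/

import Mathlib

/-!
A Chernoff bound for sampling with replacement. The truncated squares `Y j = min |u j| τ ^ 2`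
lie in `[0, τ²]` and sum to at most `X²`. For `λ = ζ / (3τ²)`, convexity of `exp` on `[0, ζ/3]`
gives `∑ j, exp (λ Y j) ≤ N exp ((e^{ζ/3} - 1) X² / (N τ²))`, and the moment generating sum over
all `J` factorises as the `T₁`-th power of this. Markov's inequality then bounds the number of `J`
with `Θ(J) > (1 + ζ) X²` by `N^{T₁} exp (-(2/9) ζ² T₁ X² / (N τ²))`, using
`e^x ≤ 1 + x + x²` for `x ≤ 1`, and the lower bound on `T₁` makes this at most `μ N^{T₁}`.
-/

open Finset Real

theorem Real.exp_mul_le_one_add_mul_exp_sub_one {t : ℝ} (s : ℝ) (ht0 : 0 ≤ t) (ht1 : t ≤ 1) :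
    exp (t * s) ≤ 1 + t * (exp s - 1) := by
  have h := convexOn_exp.2 (Set.mem_univ 0) (Set.mem_univ s) (sub_nonneg.2 ht1) ht0 (by ring)
  simp only [smul_eq_mul, mul_zero, zero_add, exp_zero, mul_one] at h
  linarith

theorem sum_exp_mul_le_card_mul_exp {ι : Type*} [Fintype ι] {Y : ι → ℝ} {b : ℝ} (s : ℝ)
    (hb : 0 < b) (hY0 : ∀ j, 0 ≤ Y j) (hYb : ∀ j, Y j ≤ b) :
    ∑ j, exp (s / b * Y j) ≤
      Fintype.card ι * exp ((exp s - 1) * (∑ j, Y j) / (Fintype.card ι * b)) := by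
  rcases isEmpty_or_nonempty ι with _ | _
  · simp
  have hcard : (0 : ℝ) < Fintype.card ι := by exact_mod_cast Fintype.card_pos
  calc ∑ j, exp (s / b * Y j)
      ≤ ∑ j, (1 + Y j / b * (exp s - 1)) := by
        gcongr with j
        rw [div_mul_comm]
        exact exp_mul_le_one_add_mul_exp_sub_one s (div_nonneg (hY0 j) hb.le)
          ((div_le_one hb).2 (hYb j))
    _ = Fintype.card ι * (1 + (exp s - 1) * (∑ j, Y j) / (Fintype.card ι * b)) := by
        rw [sum_add_distrib, ← sum_mul, ← sum_div, sum_const, card_univ, nsmul_one]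
        field_simp
    _ ≤ _ := by
        gcongr
        linarith [add_one_le_exp ((exp s - 1) * (∑ j, Y j) / (Fintype.card ι * b))]

theorem card_filter_lt_mul_exp_le {α : Type*} (s : Finset α) (f : α → ℝ) {l : ℝ} (hl : 0 ≤ l)
    (a : ℝ) : #(s.filter (a < f ·)) * exp (l * a) ≤ ∑ x ∈ s, exp (l * f x) :=
  calc #(s.filter (a < f ·)) * exp (l * a) = ∑ _x ∈ s.filter (a < f ·), exp (l * a) := by
        rw [sum_const, nsmul_eq_mul]
    _ ≤ ∑ x ∈ s.filter (a < f ·), exp (l * f x) :=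
        sum_le_sum fun x hx ↦ exp_le_exp.2 (mul_le_mul_of_nonneg_left (mem_filter.1 hx).2.le hl)
    _ ≤ ∑ x ∈ s, exp (l * f x) :=
        sum_le_sum_of_subset_of_nonneg (filter_subset _ _) fun _ _ _ ↦ (exp_pos _).le

theorem sum_exp_mul_sum_comp_eq_pow {ι : Type*} [Fintype ι] (Y : ι → ℝ) (l : ℝ)
    (T : ℕ) : ∑ J : Fin T → ι, exp (l * ∑ i, Y (J i)) = (∑ j, exp (l * Y j)) ^ T := by
  rw [Fintype.sum_pow]
  simp only [mul_sum, exp_sum]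

theorem card_filter_lt_sum_comp_le {ι : Type*} [Fintype ι] {Y : ι → ℝ}
    {b M s : ℝ} (hb : 0 < b) (hs : 0 ≤ s) (hY0 : ∀ j, 0 ≤ Y j) (hYb : ∀ j, Y j ≤ b)
    (hM : ∑ j, Y j ≤ M) (T : ℕ) (a : ℝ) :
    #{J : Fin T → ι | a < ∑ i, Y (J i)} ≤
      Fintype.card ι ^ T * exp (T * ((exp s - 1) * M / (Fintype.card ι * b)) - s / b * a) := by
  have hmarkov := card_filter_lt_mul_exp_le univ (fun J : Fin T → ι ↦ ∑ i, Y (J i))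
    (div_nonneg hs hb.le) a
  have hsum : ∑ j, exp (s / b * Y j) ≤
      Fintype.card ι * exp ((exp s - 1) * M / (Fintype.card ι * b)) := by
    refine (sum_exp_mul_le_card_mul_exp s hb hY0 hYb).trans ?_
    gcongr
    linarith [one_le_exp hs]
  rw [sum_exp_mul_sum_comp_eq_pow, ← le_div_iff₀ (exp_pos _)] at hmarkov
  calc _ ≤ _ := hmarkov
    _ ≤ (Fintype.card ι * exp ((exp s - 1) * M / (Fintype.card ι * b))) ^ T
          / exp (s / b * a) := by gcongr
    _ = _ := by rw [mul_pow, ← exp_nat_mul, mul_div_assoc, ← exp_sub]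

theorem one_sub_mul_card_le_card_filter {α : Type*} [Fintype α] (p : α → Prop) [DecidablePred p]
    {μ : ℝ} (h : #{x | ¬ p x} ≤ μ * Fintype.card α) : (1 - μ) * Fintype.card α ≤ #{x | p x} := by
  have hsplit := card_filter_add_card_filter_not (s := univ) p
  rw [card_univ] at hsplit
  rw [← hsplit] at h ⊢
  push_cast at h ⊢
  linarith

theorem min_abs_sq_le_sq (x : ℝ) {τ : ℝ} (hτ : 0 ≤ τ) : min |x| τ ^ 2 ≤ x ^ 2 :=
  sq_abs x ▸ pow_le_pow_left₀ (le_min (abs_nonneg x) hτ) (min_le_left _ _) 2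

theorem min_abs_sq_le_sq_right (x : ℝ) {τ : ℝ} (hτ : 0 ≤ τ) : min |x| τ ^ 2 ≤ τ ^ 2 :=
  pow_le_pow_left₀ (le_min (abs_nonneg x) hτ) (min_le_right _ _) 2

theorem chernoff_exponent_le_log {N T : ℕ} {τ ζ X μ : ℝ} (hN : 0 < N) (hτ : 0 < τ)
    (hζ : 0 < ζ) (hζ1 : ζ ≤ 1) (hX : 0 < X) (hμ : 0 < μ)
    (hT : 9 / 2 * N * τ ^ 2 * log (2 / μ) / (ζ ^ 2 * X ^ 2) ≤ T) :
    T * ((exp (ζ / 3) - 1) * X ^ 2 / (N * τ ^ 2)) - ζ / 3 / τ ^ 2 * ((1 + ζ) * X ^ 2 * T / N)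
      ≤ log μ := by
  have hN' : (0 : ℝ) < N := by exact_mod_cast hN
  have hexp : exp (ζ / 3) - 1 - ζ / 3 ≤ (ζ / 3) ^ 2 :=
    (le_abs_self _).trans <|
      abs_exp_sub_one_sub_id_le (by rw [abs_of_pos (by positivity)]; linarith)
  have hlog : -log μ ≤ log (2 / μ) := by
    rw [log_div two_ne_zero hμ.ne']
    linarith [log_pos one_lt_two]
  rw [div_le_iff₀ (by positivity)] at hT
  have hD : 0 ≤ T * X ^ 2 / (N * τ ^ 2) := by positivity
  calc _ = T * X ^ 2 / (N * τ ^ 2) * (exp (ζ / 3) - 1 - ζ / 3 - ζ ^ 2 / 3) := by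
        field_simp
        ring
    _ ≤ T * X ^ 2 / (N * τ ^ 2) * (-(2 / 9 * ζ ^ 2)) := by gcongr; linarith
    _ = -(2 / 9 * (T * (ζ ^ 2 * X ^ 2)) / (N * τ ^ 2)) := by ring
    _ ≤ -log (2 / μ) := by
        rw [neg_le_neg_iff, le_div_iff₀ (by positivity)]
        linarith
    _ ≤ log μ := by linarith

theorem card_estimator_gt_le {N : ℕ} (hN : 0 < N) (u : Fin N → ℝ) {τ ζ X μ : ℝ} (hτ : 0 < τ)
    (hζ : 0 < ζ) (hζ1 : ζ ≤ 1) (hX : 0 < X) (hXu : √(∑ i, u i ^ 2) ≤ X) (hμ : 0 < μ)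
    (hμ1 : μ < 1) {T : ℕ} (hT : 9 / 2 * N * τ ^ 2 * log (2 / μ) / (ζ ^ 2 * X ^ 2) ≤ T) :
    #{J : Fin T → Fin N | ¬ (N / T * ∑ i, min |u (J i)| τ ^ 2 ≤ (1 + ζ) * X ^ 2)}
      ≤ μ * N ^ T := by
  have hN' : (0 : ℝ) < N := by exact_mod_cast hN
  have hlog : 0 < log (2 / μ) := log_pos (by rw [lt_div_iff₀ hμ]; linarith)
  have hT' : (0 : ℝ) < T := lt_of_lt_of_le (by positivity) hT
  have hsum : ∑ j, min |u j| τ ^ 2 ≤ X ^ 2 :=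
    (sum_le_sum fun j _ ↦ min_abs_sq_le_sq (u j) hτ.le).trans
      ((sqrt_le_left hX.le).1 hXu)
  have hbad : ∀ J : Fin T → Fin N,
      ¬ (N / T * ∑ i, min |u (J i)| τ ^ 2 ≤ (1 + ζ) * X ^ 2) →
        (1 + ζ) * X ^ 2 * T / N < ∑ i, min |u (J i)| τ ^ 2 := by
    intro J hJ
    rw [not_le, div_mul_eq_mul_div, lt_div_iff₀ hT'] at hJ
    rw [div_lt_iff₀ hN']
    linarith
  calc _ ≤ (#{J : Fin T → Fin N | (1 + ζ) * X ^ 2 * T / N < ∑ i, min |u (J i)| τ ^ 2} : ℝ) := by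
        exact_mod_cast card_le_card (monotone_filter_right univ fun J _ ↦ hbad J)
    _ ≤ _ := card_filter_lt_sum_comp_le (s := ζ / 3) (by positivity) (by positivity)
        (fun _ ↦ sq_nonneg _) (fun j ↦ min_abs_sq_le_sq_right (u j) hτ.le) hsum T _
    _ ≤ N ^ T * exp (log μ) := by
        rw [Fintype.card_fin]
        gcongr
        exact chernoff_exponent_le_log hN hτ hζ hζ1 hX hμ hT
    _ = μ * N ^ T := by rw [exp_log hμ, mul_comm]

open Classical in
theorem stmt_4 :
    ∃ A : ℝ, 0 < A ∧
      ∀ N : ℕ, 1 ≤ N → ∀ u : Fin N → ℝ, ∀ τ : ℝ, 0 < τ →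
      ∀ ζ : ℝ, 0 < ζ → ζ ≤ 1 →
      ∀ X : ℝ, 0 < X → Real.sqrt (∑ i, u i ^ 2) ≤ X →
      ∀ μ : ℝ, 0 < μ → μ < 1 →
      ∀ T1 : ℕ, A * N * τ ^ 2 * Real.log (2 / μ) / (ζ ^ 2 * X ^ 2) ≤ T1 →
      (1 - μ) * (Fintype.card (Fin T1 → Fin N) : ℝ) ≤
        ((Finset.univ.filter (fun J : Fin T1 → Fin N =>
          (N : ℝ) / (T1 : ℝ) * ∑ i : Fin T1, (min |u (J i)| τ) ^ 2 ≤ (1 + ζ) * X ^ 2)).card : ℝ) := by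
  refine ⟨9 / 2, by norm_num, fun N hN u τ hτ ζ hζ hζ1 X hX hXu μ hμ hμ1 T1 hT1 ↦ ?_⟩
  apply one_sub_mul_card_le_card_filter
  rw [Fintype.card_fun, Fintype.card_fin, Fintype.card_fin, Nat.cast_pow]
  exact card_estimator_gt_le hN u hτ hζ hζ1 hX hXu hμ hμ1 hT1
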